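/- If l is odd, l ≥ 3, then every so_{2l}-invariant bilinear map S⁺ × S⁺ → so_{2l} is zero. -/

import Mathlib

/-!
STATEMENT 9: If `l` is odd, `l ≥ 3`, then every `so_{2l}`-invariant bilinear map
`S⁺ × S⁺ → so_{2l}` is zero.

Setup: `so_{2l} = so(V ⊕ V*, q)` with `q(f + v) = f(v)` is identified with the span
`[V⊕V*, V⊕V*]·` of commutators inside `Cl₀(V⊕V*, q)`; `S⁺ = ⋀₀V` is the even part of the
exterior algebra; the half-spin representation `ρ⁺` is characterized on `[V⊕V*,V⊕V*]·` by
`ρ⁺([x,y]·) = [l_{v_x} + df_x, l_{v_y} + df_y]|_{S⁺}` for `x = (f_x, v_x)`,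
`y = (f_y, v_y) ∈ V* × V`.
-/

noncomputable section

open CliffordAlgebra

/-- `x = (f,v) ∈ V* × V` acting on `⋀V` as `l_v + df`. -/
def mOp (k V : Type*) [Field k] [AddCommGroup V] [Module k V]
    (d : Module.Dual k V → Module.End k (ExteriorAlgebra k V))
    (x : Module.Dual k V × V) : Module.End k (ExteriorAlgebra k V) :=
  LinearMap.mulLeft k (ExteriorAlgebra.ι k x.2) + d x.1

/-- `so_{2l}`, identified with the subspace `[V⊕V*, V⊕V*]·` of `Cl₀(V⊕V*,q)`. -/
def soD (k V : Type*) [Field k] [AddCommGroup V] [Module k V] :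
    Submodule k (CliffordAlgebra (QuadraticForm.dualProd k V)) :=
  Submodule.span k {z | ∃ x y : Module.Dual k V × V,
    z = CliffordAlgebra.ι (QuadraticForm.dualProd k V) x *
          CliffordAlgebra.ι (QuadraticForm.dualProd k V) y -
        CliffordAlgebra.ι (QuadraticForm.dualProd k V) y *
          CliffordAlgebra.ι (QuadraticForm.dualProd k V) x}

/-- The half-spin module `S⁺ = ⋀₀V`, the even part of the exterior algebra. -/
def Splus (k V : Type*) [Field k] [AddCommGroup V] [Module k V] :
    Submodule k (ExteriorAlgebra k V) :=
  CliffordAlgebra.evenOdd (0 : QuadraticForm k V) 0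

section Helpers

variable {k : Type*} [Field k]
variable {V : Type*} [AddCommGroup V] [Module k V] {l : ℕ}

lemma listProdEig {M : Type*} [AddCommGroup M] [Module k M] {ι' : Type*}
    (F : ι' → Module.End k M) (c : ι' → k) (u : M)
    (h : ∀ j, F j u = c j • u) (L : List ι') :
    (L.map F).prod u = (L.map c).prod • u := by
  induction L with
  | nil => simp
  | cons a L ih =>
    simp only [List.map_cons, List.prod_cons, Module.End.mul_apply, ih, map_smul, h a,
      smul_smul]
    rw [mul_comm]

lemma listProdConj {M : Type*} [AddCommGroup M] [Module k M] {ι' : Type*}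
    (F : ι' → Module.End k M) (c : ι' → k) (A : Module.End k M)
    (h : ∀ j y, F j (A y) = c j • A (F j y)) (L : List ι') (y : M) :
    (L.map F).prod (A y) = (L.map c).prod • A ((L.map F).prod y) := by
  induction L generalizing y with
  | nil => simp
  | cons a L ih =>
    simp only [List.map_cons, List.prod_cons, Module.End.mul_apply, ih, map_smul, h,
      smul_smul]
    rw [mul_comm]

lemma listProdCoe {M : Type*} [AddCommGroup M] [Module k M] {S : Submodule k M} {ι' : Type*}
    (R : ι' → Module.End k S) (D : ι' → Module.End k M)
    (h : ∀ j u, ((R j u : M)) = D j (u : M)) (L : List ι') (u : S) :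
    (((L.map R).prod u : M)) = (L.map D).prod (u : M) := by
  induction L generalizing u with
  | nil => simp
  | cons a L ih => simp only [List.map_cons, List.prod_cons, Module.End.mul_apply, h, ih]

lemma cliff_comm {M : Type*} [AddCommGroup M] [Module k M] (Q : QuadraticForm k M)
    (a b z : M) :
    (ι Q a * ι Q b - ι Q b * ι Q a) * ι Q z - ι Q z * (ι Q a * ι Q b - ι Q b * ι Q a) =
      (2 * QuadraticMap.polar Q b z) • ι Q a - (2 * QuadraticMap.polar Q a z) • ι Q b := by
  have key : ∀ u w : M, ι Q u * ι Q w * ι Q z =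
      QuadraticMap.polar Q w z • ι Q u - QuadraticMap.polar Q u z • ι Q w
        + ι Q z * (ι Q u * ι Q w) := by
    intro u w
    rw [mul_assoc, ι_mul_ι_comm w z, mul_sub, ← mul_assoc, ι_mul_ι_comm u z, sub_mul,
      ← Algebra.commutes, ← Algebra.smul_def, ← Algebra.smul_def, mul_assoc]
    abel
  rw [sub_mul, mul_sub, key a b, key b a]
  module

lemma polar_dualProd (x y : Module.Dual k V × V) :
    QuadraticMap.polar (QuadraticForm.dualProd k V) x y = x.1 y.2 + y.1 x.2 := by
  simp [QuadraticMap.polar, QuadraticForm.dualProd_apply]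
  ring

/-- basis elements of `V* × V` -/
def genP (b : Module.Basis (Fin l) k V) : Fin l ⊕ Fin l → Module.Dual k V × V
  | .inl i => (b.coord i, 0)
  | .inr i => (0, b i)

def sigmaD (b : Module.Basis (Fin l) k V) (j : Fin l) :
    CliffordAlgebra (QuadraticForm.dualProd k V) :=
  CliffordAlgebra.ι (QuadraticForm.dualProd k V) (genP b (.inl j)) *
      CliffordAlgebra.ι (QuadraticForm.dualProd k V) (genP b (.inr j)) -
    CliffordAlgebra.ι (QuadraticForm.dualProd k V) (genP b (.inr j)) *
      CliffordAlgebra.ι (QuadraticForm.dualProd k V) (genP b (.inl j))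

def TD (b : Module.Basis (Fin l) k V) (j : Fin l) :
    Module.End k (CliffordAlgebra (QuadraticForm.dualProd k V)) :=
  LinearMap.mulLeft k (sigmaD b j) - LinearMap.mulRight k (sigmaD b j)

def wtD (k : Type*) [Field k] {l : ℕ} (j : Fin l) : Fin l ⊕ Fin l → k
  | .inl i => if i = j then 2 else 0
  | .inr i => if i = j then -2 else 0

lemma TD_apply (b : Module.Basis (Fin l) k V) (j : Fin l) (z) :
    TD b j z = sigmaD b j * z - z * sigmaD b j := by
  simp [TD, LinearMap.sub_apply]

lemma TD_mul (b : Module.Basis (Fin l) k V) (j : Fin l) (u v) :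
    TD b j (u * v) = TD b j u * v + u * TD b j v := by
  simp only [TD_apply]; noncomm_ring

lemma coord_apply_basis (b : Module.Basis (Fin l) k V) (i j : Fin l) :
    b.coord i (b j) = if j = i then 1 else 0 := by
  simp [Module.Basis.coord_apply, Module.Basis.repr_self, Finsupp.single_apply]

lemma TD_ι (b : Module.Basis (Fin l) k V) (j : Fin l) (g : Fin l ⊕ Fin l) :
    TD b j (CliffordAlgebra.ι (QuadraticForm.dualProd k V) (genP b g)) =
      wtD k j g • CliffordAlgebra.ι (QuadraticForm.dualProd k V) (genP b g) := by
  rw [TD_apply, sigmaD, cliff_comm (QuadraticForm.dualProd k V)]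
  cases g with
  | inl i =>
    simp only [polar_dualProd, genP, wtD]
    by_cases hij : i = j
    · subst hij; simp [coord_apply_basis]
    · simp [coord_apply_basis, Finsupp.single_apply, hij, Ne.symm hij]
  | inr i =>
    simp only [polar_dualProd, genP, wtD]
    by_cases hij : i = j
    · subst hij; simp [coord_apply_basis]
    · simp [coord_apply_basis, Finsupp.single_apply, hij, Ne.symm hij]

/-- commutator as a bilinear map -/
def CbD : (Module.Dual k V × V) →ₗ[k] (Module.Dual k V × V) →ₗ[k]
    CliffordAlgebra (QuadraticForm.dualProd k V) :=
  LinearMap.mk₂ k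
    (fun x y => CliffordAlgebra.ι (QuadraticForm.dualProd k V) x *
        CliffordAlgebra.ι (QuadraticForm.dualProd k V) y -
      CliffordAlgebra.ι (QuadraticForm.dualProd k V) y *
        CliffordAlgebra.ι (QuadraticForm.dualProd k V) x)
    (by intros; simp only [map_add]; noncomm_ring)
    (by intro c m n; rw [map_smul, smul_mul_assoc, mul_smul_comm, smul_sub])
    (by intros; simp only [map_add]; noncomm_ring)
    (by intro c m n; rw [map_smul, smul_mul_assoc, mul_smul_comm, smul_sub])

lemma CbD_apply (x y : Module.Dual k V × V) :
    CbD x y = CliffordAlgebra.ι (QuadraticForm.dualProd k V) x *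
        CliffordAlgebra.ι (QuadraticForm.dualProd k V) y -
      CliffordAlgebra.ι (QuadraticForm.dualProd k V) y *
        CliffordAlgebra.ι (QuadraticForm.dualProd k V) x := rfl

lemma TD_CbD (b : Module.Basis (Fin l) k V) (j : Fin l) (g g' : Fin l ⊕ Fin l) :
    TD b j (CbD (genP b g) (genP b g')) =
      (wtD k j g + wtD k j g') • CbD (genP b g) (genP b g') := by
  set A := CliffordAlgebra.ι (QuadraticForm.dualProd k V) (genP b g) with hA
  set B := CliffordAlgebra.ι (QuadraticForm.dualProd k V) (genP b g') with hB
  have hTA : TD b j A = wtD k j g • A := TD_ι b j g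
  have hTB : TD b j B = wtD k j g' • B := TD_ι b j g'
  have hAB : TD b j (A * B) = (wtD k j g + wtD k j g') • (A * B) := by
    rw [TD_mul, hTA, hTB, smul_mul_assoc, mul_smul_comm, add_smul]
  have hBA : TD b j (B * A) = (wtD k j g + wtD k j g') • (B * A) := by
    rw [TD_mul, hTA, hTB, smul_mul_assoc, mul_smul_comm, add_smul]
    abel
  rw [CbD_apply, ← hA, ← hB, map_sub, hAB, hBA, smul_sub]

variable (d : Module.Dual k V → Module.End k (ExteriorAlgebra k V))

section dLemmas
variable (hd1 : ∀ f, d f 1 = 0)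
variable (hdmul : ∀ (f : Module.Dual k V) (w : V) (x : ExteriorAlgebra k V),
      d f (ExteriorAlgebra.ι k w * x) = f w • x - ExteriorAlgebra.ι k w * d f x)

include hd1 in
lemma d_algebraMap (f : Module.Dual k V) (r : k) :
    d f (algebraMap k (ExteriorAlgebra k V) r) = 0 := by
  rw [Algebra.algebraMap_eq_smul_one, map_smul, hd1, smul_zero]

include hd1 hdmul in
lemma d_anticomm (f g : Module.Dual k V) (x : ExteriorAlgebra k V) :
    d f (d g x) + d g (d f x) = 0 := by
  have hx : x ∈ (⊤ : Submodule k (ExteriorAlgebra k V)) := trivial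
  rw [← CliffordAlgebra.iSup_ι_range_eq_top (Q := (0 : QuadraticForm k V))] at hx
  refine Submodule.iSup_induction (motive := fun y => d f (d g y) + d g (d f y) = 0) _ hx ?_ ?_ ?_
  · intro n y hy
    induction hy using Submodule.pow_induction_on_left' with
    | algebraMap r => rw [d_algebraMap d hd1, d_algebraMap d hd1, map_zero, map_zero, add_zero]
    | add x y i hx hy ihx ihy =>
      rw [map_add, map_add, map_add, map_add]
      calc _ = (d f (d g x) + d g (d f x)) + (d f (d g y) + d g (d f y)) := by abel
        _ = 0 := by rw [ihx, ihy, add_zero]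
    | mem_mul m hm i x hx ih =>
      obtain ⟨v, rfl⟩ := hm
      have hv : (CliffordAlgebra.ι (0 : QuadraticForm k V)) v = ExteriorAlgebra.ι k v := rfl
      rw [hv, hdmul, hdmul, map_sub, map_sub, map_smul, map_smul, hdmul, hdmul]
      calc _ = ExteriorAlgebra.ι k v * (d f (d g x) + d g (d f x)) := by
            rw [mul_add]; abel
        _ = 0 := by rw [ih, mul_zero]
  · simp
  · intro y z hy hz
    rw [map_add, map_add, map_add, map_add]
    calc _ = (d f (d g y) + d g (d f y)) + (d f (d g z) + d g (d f z)) := by abel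
      _ = 0 := by rw [hy, hz, add_zero]
end dLemmas

def DopD (b : Module.Basis (Fin l) k V) (j : Fin l) : Module.End k (ExteriorAlgebra k V) :=
  1 - (2 : k) • (LinearMap.mulLeft k (ExteriorAlgebra.ι k (b j)) * d (b.coord j))

lemma DopD_apply (b : Module.Basis (Fin l) k V) (j : Fin l) (x : ExteriorAlgebra k V) :
    DopD d b j x = x - (2 : k) • (ExteriorAlgebra.ι k (b j) * d (b.coord j) x) := by
  simp [DopD, LinearMap.sub_apply, LinearMap.smul_apply, Module.End.mul_apply]

section DopLemmas
variable (hd1 : ∀ f, d f 1 = 0)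
variable (hdmul : ∀ (f : Module.Dual k V) (w : V) (x : ExteriorAlgebra k V),
      d f (ExteriorAlgebra.ι k w * x) = f w • x - ExteriorAlgebra.ι k w * d f x)
variable (b : Module.Basis (Fin l) k V)

include hd1 in
lemma DopD_algebraMap (j : Fin l) (r : k) :
    DopD d b j (algebraMap k (ExteriorAlgebra k V) r) =
      algebraMap k (ExteriorAlgebra k V) r := by
  rw [DopD_apply, d_algebraMap d hd1, mul_zero, smul_zero, sub_zero]

include hdmul in
lemma DopD_sq (j : Fin l) (x : ExteriorAlgebra k V) :
    DopD d b j (DopD d b j x) = x := by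
  have hc : b.coord j (b j) = 1 := by simp [coord_apply_basis]
  rw [DopD_apply, DopD_apply, map_sub, map_smul, hdmul, hc, one_smul]
  simp only [mul_sub, mul_smul_comm, smul_sub, smul_smul, ← mul_assoc,
    ExteriorAlgebra.ι_sq_zero, zero_mul, smul_zero, mul_zero, sub_zero]
  module

include hdmul in
lemma DopD_comm (i j : Fin l) (hij : i ≠ j)
    (hanti : ∀ f g x, d f (d g x) + d g (d f x) = 0) (x : ExteriorAlgebra k V) :
    DopD d b i (DopD d b j x) = DopD d b j (DopD d b i x) := by
  have hcij : b.coord i (b j) = 0 := by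
    simp [coord_apply_basis, Finsupp.single_apply, hij, Ne.symm hij]
  have hcji : b.coord j (b i) = 0 := by
    simp [coord_apply_basis, Finsupp.single_apply, hij, Ne.symm hij]
  have key : ExteriorAlgebra.ι k (b i) * d (b.coord i) (ExteriorAlgebra.ι k (b j)
        * d (b.coord j) x) =
      ExteriorAlgebra.ι k (b j) * d (b.coord j) (ExteriorAlgebra.ι k (b i)
        * d (b.coord i) x) := by
    have hanti' : d (b.coord j) (d (b.coord i) x) = - d (b.coord i) (d (b.coord j) x) :=
      eq_neg_of_add_eq_zero_left (hanti (b.coord j) (b.coord i) x)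
    have hswap : ExteriorAlgebra.ι k (b i) * ExteriorAlgebra.ι k (b j) =
        - (ExteriorAlgebra.ι k (b j) * ExteriorAlgebra.ι k (b i)) :=
      eq_neg_of_add_eq_zero_left (ExteriorAlgebra.ι_add_mul_swap (b i) (b j))
    calc ExteriorAlgebra.ι k (b i) * d (b.coord i) (ExteriorAlgebra.ι k (b j) * d (b.coord j) x)
        = ExteriorAlgebra.ι k (b i) * (b.coord i (b j) • d (b.coord j) x
            - ExteriorAlgebra.ι k (b j) * d (b.coord i) (d (b.coord j) x)) := by rw [hdmul]
      _ = - (ExteriorAlgebra.ι k (b i) * (ExteriorAlgebra.ι k (b j)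
            * d (b.coord i) (d (b.coord j) x))) := by
          rw [hcij, zero_smul, zero_sub, mul_neg]
      _ = ExteriorAlgebra.ι k (b j) * (ExteriorAlgebra.ι k (b i)
            * d (b.coord i) (d (b.coord j) x)) := by
          rw [← mul_assoc, ← mul_assoc, hswap, neg_mul, neg_neg]
      _ = ExteriorAlgebra.ι k (b j) * d (b.coord j) (ExteriorAlgebra.ι k (b i)
            * d (b.coord i) x) := by
          rw [hdmul, hcji, zero_smul, zero_sub, hanti']
          simp [mul_neg]
  rw [DopD_apply, DopD_apply, DopD_apply, DopD_apply, map_sub, map_smul, map_sub, map_smul]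
  simp only [mul_sub, mul_smul_comm, smul_sub, smul_smul]
  rw [key]
  module

include hdmul in
lemma DopD_Lbasis (i j : Fin l) (y : ExteriorAlgebra k V) :
    DopD d b j (ExteriorAlgebra.ι k (b i) * y) =
      (if j = i then (-1 : k) else 1) • (ExteriorAlgebra.ι k (b i) * DopD d b j y) := by
  by_cases hji : j = i
  · subst hji
    have hc : b.coord j (b j) = 1 := by simp [coord_apply_basis]
    rw [DopD_apply, DopD_apply, hdmul, hc, one_smul, if_pos rfl]
    simp only [mul_sub, mul_smul_comm, smul_sub, smul_smul, ← mul_assoc,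
      ExteriorAlgebra.ι_sq_zero, zero_mul, smul_zero, mul_zero, sub_zero]
    module
  · have hc : b.coord j (b i) = 0 := by
      simp [coord_apply_basis, Finsupp.single_apply, hji, Ne.symm hji]
    have hswap : ExteriorAlgebra.ι k (b j) * ExteriorAlgebra.ι k (b i) =
        - (ExteriorAlgebra.ι k (b i) * ExteriorAlgebra.ι k (b j)) :=
      eq_neg_of_add_eq_zero_left (ExteriorAlgebra.ι_add_mul_swap (b j) (b i))
    rw [DopD_apply, DopD_apply, hdmul, hc, zero_smul, zero_sub, if_neg hji, one_smul]
    rw [mul_neg, ← mul_assoc, hswap]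
    simp only [neg_mul, mul_assoc, smul_neg, sub_neg_eq_add, mul_sub, mul_smul_comm, smul_sub]
    module

include hd1 hdmul in
lemma PiD_even (x : ExteriorAlgebra k V)
    (hx : x ∈ CliffordAlgebra.evenOdd (0 : QuadraticForm k V) 0) :
    ((Finset.univ.toList.map (DopD d b)).prod) x = x := by
  induction x, hx using CliffordAlgebra.even_induction with
  | algebraMap r =>
    rw [listProdEig (DopD d b) (fun _ => (1 : k)) _
      (fun j => by rw [DopD_algebraMap d hd1 b, one_smul]) Finset.univ.toList]
    simp
  | add x y hx hy ihx ihy => rw [map_add, ihx, ihy]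
  | ι_mul_ι_mul m₁ m₂ x hx ih =>
    have hvgen : ∀ (v : V) (y : ExteriorAlgebra k V),
        ((Finset.univ.toList.map (DopD d b)).prod) (ExteriorAlgebra.ι k v * y) =
          - (ExteriorAlgebra.ι k v * ((Finset.univ.toList.map (DopD d b)).prod) y) := by
      intro v y
      have hbase : ∀ (i : Fin l) (y : ExteriorAlgebra k V),
          ((Finset.univ.toList.map (DopD d b)).prod) (ExteriorAlgebra.ι k (b i) * y) =
            - (ExteriorAlgebra.ι k (b i) * ((Finset.univ.toList.map (DopD d b)).prod) y) := by
        intro i y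
        have := listProdConj (DopD d b) (fun j => if j = i then (-1 : k) else 1)
          (LinearMap.mulLeft k (ExteriorAlgebra.ι k (b i)))
          (fun j y => DopD_Lbasis d hdmul b i j y) Finset.univ.toList y
        simp only [LinearMap.mulLeft_apply] at this
        rw [this, Finset.prod_map_toList, Finset.prod_ite_eq', if_pos (Finset.mem_univ i)]
        rw [neg_one_smul]
      have hy := Module.Basis.sum_repr b v
      calc ((Finset.univ.toList.map (DopD d b)).prod) (ExteriorAlgebra.ι k v * y)
          = ((Finset.univ.toList.map (DopD d b)).prod)
              (∑ i, b.repr v i • (ExteriorAlgebra.ι k (b i) * y)) := by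
            conv_lhs => rw [← hy]
            rw [map_sum, Finset.sum_mul]
            simp only [map_smul, smul_mul_assoc]
        _ = ∑ i, b.repr v i • ((Finset.univ.toList.map (DopD d b)).prod)
              (ExteriorAlgebra.ι k (b i) * y) := by rw [map_sum]; simp only [map_smul]
        _ = ∑ i, b.repr v i •
              (- (ExteriorAlgebra.ι k (b i) * ((Finset.univ.toList.map (DopD d b)).prod) y)) := by
            simp only [hbase]
        _ = - (ExteriorAlgebra.ι k v * ((Finset.univ.toList.map (DopD d b)).prod) y) := by
            conv_rhs => rw [← hy]
            rw [map_sum, Finset.sum_mul, ← Finset.sum_neg_distrib]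
            simp [smul_mul_assoc, smul_neg]
    have hι : ∀ v : V, (CliffordAlgebra.ι (0 : QuadraticForm k V)) v = ExteriorAlgebra.ι k v :=
      fun _ => rfl
    rw [hι, hι, mul_assoc, hvgen, hvgen, ih, mul_neg, neg_neg, ← mul_assoc]

end DopLemmas
end Helpers

set_option maxHeartbeats 1000000 in
theorem typeD_odd_no_invariant_map (k V : Type*) [Field k] [IsAlgClosed k]
    (h2 : (2 : k) ≠ 0) (l : ℕ) (hodd : Odd l) (hl : 3 ≤ l)
    [AddCommGroup V] [Module k V] [FiniteDimensional k V]
    (hdim : Module.finrank k V = l)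
    -- the superderivations `df`
    (d : Module.Dual k V → Module.End k (ExteriorAlgebra k V))
    (hd1 : ∀ f, d f 1 = 0)
    (hdmul : ∀ (f : Module.Dual k V) (w : V) (x : ExteriorAlgebra k V),
      d f (ExteriorAlgebra.ι k w * x) = f w • x - ExteriorAlgebra.ι k w * d f x)
    -- the half-spin representation `ρ⁺`, characterized on `[V⊕V*,V⊕V*]·`
    (ρp : CliffordAlgebra (QuadraticForm.dualProd k V) →ₗ[k]
        Module.End k (Splus k V))
    (hρp : ∀ x y : Module.Dual k V × V, ∀ s : Splus k V,
      ((ρp (CliffordAlgebra.ι (QuadraticForm.dualProd k V) x *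
              CliffordAlgebra.ι (QuadraticForm.dualProd k V) y -
            CliffordAlgebra.ι (QuadraticForm.dualProd k V) y *
              CliffordAlgebra.ι (QuadraticForm.dualProd k V) x)) s :
          ExteriorAlgebra k V) =
        (mOp k V d x * mOp k V d y - mOp k V d y * mOp k V d x)
          (s : ExteriorAlgebra k V))
    -- an arbitrary `so_{2l}`-invariant bilinear map `β : S⁺ × S⁺ → so_{2l}`
    (β : Splus k V →ₗ[k] Splus k V →ₗ[k]
        CliffordAlgebra (QuadraticForm.dualProd k V))
    (hβrange : ∀ s t, β s t ∈ soD k V)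
    (hβinv : ∀ σ ∈ soD k V, ∀ s t : Splus k V,
      σ * β s t - β s t * σ = β (ρp σ s) t + β s (ρp σ t)) :
    ∀ s t : Splus k V, β s t = 0 := by
  classical
  obtain ⟨b⟩ : Nonempty (Module.Basis (Fin l) k V) := ⟨Module.finBasisOfFinrankEq k V hdim⟩
  obtain ⟨R, hRdef⟩ : ∃ R : Fin l → Module.End k (Splus k V),
      ∀ j, R j = ρp (sigmaD b j) := ⟨_, fun _ => rfl⟩
  have hanti : ∀ f g x, d f (d g x) + d g (d f x) = 0 := d_anticomm d hd1 hdmul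
  -- the coercion of the action of `R j` is `DopD d b j`
  have hcoeR : ∀ (j : Fin l) (u : Splus k V),
      ((R j u : ExteriorAlgebra k V)) = DopD d b j (u : ExteriorAlgebra k V) := by
    intro j u
    have hc1 : b.coord j (b j) = 1 := by simp [coord_apply_basis]
    have harg : CliffordAlgebra.ι (QuadraticForm.dualProd k V) (b.coord j, b j) *
          CliffordAlgebra.ι (QuadraticForm.dualProd k V) ((b.coord j, 0) :
            Module.Dual k V × V) -
        CliffordAlgebra.ι (QuadraticForm.dualProd k V) ((b.coord j, 0) :
            Module.Dual k V × V) *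
          CliffordAlgebra.ι (QuadraticForm.dualProd k V) (b.coord j, b j) =
        - sigmaD b j := by
      have hxsum : ((b.coord j, b j) : Module.Dual k V × V) =
          genP b (.inl j) + genP b (.inr j) := by
        simp [genP, Prod.ext_iff]
      have hgen : (genP b (.inl j) : Module.Dual k V × V) = (b.coord j, 0) := rfl
      rw [hxsum, map_add, sigmaD, hgen]
      noncomm_ring
    have hmOpy : mOp k V d ((b.coord j, 0) : Module.Dual k V × V) = d (b.coord j) := by
      unfold mOp
      simp
    have hmOpx : mOp k V d (b.coord j, b j) =
        LinearMap.mulLeft k (ExteriorAlgebra.ι k (b j)) + d (b.coord j) := rfl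
    have hEnd : mOp k V d (b.coord j, b j) * mOp k V d ((b.coord j, 0) :
          Module.Dual k V × V) -
        mOp k V d ((b.coord j, 0) : Module.Dual k V × V) * mOp k V d (b.coord j, b j) =
        LinearMap.mulLeft k (ExteriorAlgebra.ι k (b j)) * d (b.coord j) -
          d (b.coord j) * LinearMap.mulLeft k (ExteriorAlgebra.ι k (b j)) := by
      rw [hmOpx, hmOpy]
      noncomm_ring
    have h1 := hρp (b.coord j, b j) ((b.coord j, 0) : Module.Dual k V × V) u
    rw [harg, map_neg, LinearMap.neg_apply, hEnd] at h1
    have h1' : ((ρp (sigmaD b j)) u : ExteriorAlgebra k V) =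
        - ((LinearMap.mulLeft k (ExteriorAlgebra.ι k (b j)) * d (b.coord j) -
          d (b.coord j) * LinearMap.mulLeft k (ExteriorAlgebra.ι k (b j)))
            (u : ExteriorAlgebra k V)) := by
      rw [← h1]
      simp
    rw [hRdef j, h1', LinearMap.sub_apply, Module.End.mul_apply, Module.End.mul_apply,
      LinearMap.mulLeft_apply, LinearMap.mulLeft_apply, hdmul, hc1, one_smul, DopD_apply]
    module
  have hRsq : ∀ (j : Fin l) (u : Splus k V), R j (R j u) = u := by
    intro j u
    apply Subtype.ext
    rw [hcoeR, hcoeR, DopD_sq d hdmul b]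
  have hRcomm : ∀ (i j : Fin l) (u : Splus k V), R i (R j u) = R j (R i u) := by
    intro i j u
    by_cases hij : i = j
    · rw [hij]
    · apply Subtype.ext
      rw [hcoeR, hcoeR, hcoeR, hcoeR, DopD_comm d hdmul b i j hij hanti]
  have hRprod : ∀ u : Splus k V, ((Finset.univ.toList.map R).prod) u = u := by
    intro u
    apply Subtype.ext
    rw [listProdCoe R (DopD d b) hcoeR]
    exact PiD_even d hd1 hdmul b _ u.2
  -- splitting a vector into ±1 eigenvectors of R a
  have hsum : ∀ (a : Fin l) (u : Splus k V),
      u = (2:k)⁻¹ • (u + (1:k) • R a u) + (2:k)⁻¹ • (u + (-1:k) • R a u) := by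
    intro a u
    have hn1 : (-1:k) • R a u = -R a u := by
      apply Subtype.ext; simp
    rw [one_smul, hn1, ← smul_add]
    have h' : (u + R a u) + (u + -R a u) = (2:k) • u := by
      rw [two_smul]; abel
    rw [h', smul_smul, inv_mul_cancel₀ h2, one_smul]
  have hsplit : ∀ (a : Fin l) (G : Finset (Fin l)), a ∉ G → ∀ u : Splus k V,
      (∀ j, j ∉ insert a G → ∃ c : k, (c = 1 ∨ c = -1) ∧ R j u = c • u) →
      ∀ e : k, (e = 1 ∨ e = -1) →
      ∀ j, j ∉ G → ∃ c : k, (c = 1 ∨ c = -1) ∧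
        R j ((2:k)⁻¹ • (u + e • R a u)) = c • ((2:k)⁻¹ • (u + e • R a u)) := by
    intro a G ha u hu e he j hj
    by_cases hja : j = a
    · subst hja
      refine ⟨e, he, ?_⟩
      have he2 : e * e = 1 := by rcases he with h | h <;> rw [h] <;> norm_num
      rw [map_smul, map_add, map_smul, hRsq]
      rw [smul_comm e ((2:k)⁻¹)]
      congr 1
      rw [smul_add, smul_smul, he2, one_smul, add_comm]
    · have hjmem : j ∉ insert a G := by
        simp [Finset.mem_insert, hja, hj]
      obtain ⟨c, hc1, hc2⟩ := hu j hjmem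
      refine ⟨c, hc1, ?_⟩
      rw [map_smul, map_add, map_smul, hRcomm j a, hc2]
      rw [map_smul, smul_comm e c, ← smul_add c, smul_comm ((2:k)⁻¹) c]
  -- the main induction
  have main : ∀ G : Finset (Fin l), ∀ s t : Splus k V,
      (∀ j, j ∉ G → ∃ c : k, (c = 1 ∨ c = -1) ∧ R j s = c • s) →
      (∀ j, j ∉ G → ∃ c : k, (c = 1 ∨ c = -1) ∧ R j t = c • t) →
      β s t = 0 := by
    intro G
    induction G using Finset.induction_on with
    | empty =>
      intro s t hs ht
      by_cases hs0 : s = 0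
      · rw [hs0, map_zero, LinearMap.zero_apply]
      by_cases ht0 : t = 0
      · rw [ht0, map_zero]
      choose ε hε1 hε2 using fun j => hs j (Finset.notMem_empty j)
      choose δ hδ1 hδ2 using fun j => ht j (Finset.notMem_empty j)
      have hprod : ∀ (u : Splus k V) (γ : Fin l → k), u ≠ 0 → (∀ j, R j u = γ j • u) →
          (∏ j, γ j) = 1 := by
        intro u γ hu0 hγ
        have h1 := hRprod u
        have h2' := listProdEig R γ u hγ Finset.univ.toList
        rw [h1, Finset.prod_map_toList] at h2'
        by_contra hne
        have hz : ((∏ j, γ j) - 1) • u = 0 := by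
          have hs1 : ((∏ j, γ j) - 1) • u = (∏ j, γ j) • u - (1:k) • u := by
            apply Subtype.ext; simp [sub_smul]
          rw [hs1, one_smul, ← h2', sub_self]
        rcases smul_eq_zero.mp hz with h | h
        · exact hne (sub_eq_zero.mp h)
        · exact hu0 h
      have hprodε := hprod s ε hs0 hε2
      have hprodδ := hprod t δ ht0 hδ2
      -- parity of the number of places where ε and δ disagree
      have hcase : ∀ j, (ε j + δ j = 0 → ε j * δ j = -1) ∧ (ε j + δ j ≠ 0 → ε j * δ j = 1) := by
        intro j
        have h11 : (1:k) + 1 ≠ 0 := by rw [one_add_one_eq_two]; exact h2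
        have hm : (-1:k) + -1 ≠ 0 := by
          intro hx; apply h11; linear_combination -hx
        constructor
        · intro hx
          rcases hε1 j with ha | ha <;> rcases hδ1 j with hb | hb <;>
            rw [ha, hb] at hx ⊢
          · exact absurd hx h11
          · norm_num
          · norm_num
          · exact absurd hx hm
        · intro hx
          rcases hε1 j with ha | ha <;> rcases hδ1 j with hb | hb <;>
            rw [ha, hb] at hx ⊢
          · norm_num
          · exact absurd (by norm_num) hx
          · exact absurd (by norm_num) hx
          · norm_num
      have hNodd : Odd (Finset.univ.filter (fun j => ε j + δ j ≠ 0)).card := by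
        have hp : (∏ j, (ε j * δ j)) = 1 := by
          rw [Finset.prod_mul_distrib, hprodε, hprodδ, one_mul]
        have hsplit2 := Finset.prod_filter_mul_prod_filter_not Finset.univ
          (fun j => ε j + δ j ≠ 0) (fun j => ε j * δ j)
        have hin : ∏ j ∈ Finset.univ.filter (fun j => ε j + δ j ≠ 0), (ε j * δ j) = 1 := by
          refine Finset.prod_eq_one ?_
          intro j hj
          rw [Finset.mem_filter] at hj
          exact (hcase j).2 hj.2
        have hout : ∏ j ∈ Finset.univ.filter (fun j => ¬ (ε j + δ j ≠ 0)), (ε j * δ j) =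
            (-1 : k) ^ (Finset.univ.filter (fun j => ¬ (ε j + δ j ≠ 0))).card := by
          rw [← Finset.prod_const]
          refine Finset.prod_congr rfl ?_
          intro j hj
          rw [Finset.mem_filter, not_not] at hj
          exact (hcase j).1 hj.2
        have hm1 : ((-1:k)) ^ (Finset.univ.filter (fun j => ¬ (ε j + δ j ≠ 0))).card = 1 := by
          calc ((-1:k)) ^ (Finset.univ.filter (fun j => ¬ (ε j + δ j ≠ 0))).card
              = ∏ j ∈ Finset.univ.filter (fun j => ¬ (ε j + δ j ≠ 0)), (ε j * δ j) :=
                hout.symm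
            _ = 1 * ∏ j ∈ Finset.univ.filter (fun j => ¬ (ε j + δ j ≠ 0)), (ε j * δ j) :=
                (one_mul _).symm
            _ = (∏ j ∈ Finset.univ.filter (fun j => ε j + δ j ≠ 0), (ε j * δ j)) *
                ∏ j ∈ Finset.univ.filter (fun j => ¬ (ε j + δ j ≠ 0)), (ε j * δ j) := by
                rw [hin]
            _ = ∏ j, (ε j * δ j) := hsplit2
            _ = 1 := hp
        have hmeven : Even (Finset.univ.filter (fun j => ¬ (ε j + δ j ≠ 0))).card := by
          by_contra hodd'
          rw [Nat.not_even_iff_odd] at hodd'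
          rw [hodd'.neg_one_pow] at hm1
          apply h2
          linear_combination -hm1
        have hcardsum := Finset.card_filter_add_card_filter_not (s := Finset.univ)
          (p := fun j => ε j + δ j ≠ 0)
        rw [Finset.card_univ, Fintype.card_fin] at hcardsum
        rcases hodd with ⟨a, hal⟩
        rcases hmeven with ⟨c, hcm⟩
        rw [Nat.odd_iff]
        omega
      -- β s t is an eigenvector of each TD b j
      have hσmem : ∀ j, sigmaD b j ∈ soD k V :=
        fun j => Submodule.subset_span ⟨genP b (.inl j), genP b (.inr j), rfl⟩
      have hTz : ∀ j, TD b j (β s t) = (ε j + δ j) • β s t := by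
        intro j
        have hinv := hβinv (sigmaD b j) (hσmem j) s t
        rw [← hRdef j] at hinv
        rw [hε2 j, hδ2 j, map_smul, LinearMap.smul_apply, map_smul] at hinv
        rw [TD_apply, hinv, add_smul]
      have h4 : (4:k) ≠ 0 := by
        intro hx
        apply h2
        have h22 : (2:k) * 2 = 4 := by norm_num
        rcases mul_eq_zero.mp (h22.trans hx) with h | h <;> exact h
      obtain ⟨fop, hfopdef⟩ : ∃ fop : Fin l → Module.End k
          (CliffordAlgebra (QuadraticForm.dualProd k V)),
          ∀ j, fop j = if ε j + δ j = 0
            then TD b j * TD b j - (4:k) • (1 : Module.End k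
              (CliffordAlgebra (QuadraticForm.dualProd k V)))
            else TD b j := ⟨_, fun _ => rfl⟩
      have hfopeig : ∀ (w : CliffordAlgebra (QuadraticForm.dualProd k V)) (μ : Fin l → k),
          (∀ j, TD b j w = μ j • w) → ∀ j,
          fop j w = (if ε j + δ j = 0 then μ j * μ j - 4 else μ j) • w := by
        intro w μ hμ j
        rw [hfopdef j]
        by_cases h0 : ε j + δ j = 0
        · rw [if_pos h0, if_pos h0, LinearMap.sub_apply, Module.End.mul_apply, hμ j, map_smul,
            hμ j, LinearMap.smul_apply, Module.End.one_apply, smul_smul, sub_smul]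
        · rw [if_neg h0, if_neg h0]
          exact hμ j
      have hzeig := hfopeig (β s t) (fun j => ε j + δ j) hTz
      have hOpz : ((Finset.univ.toList.map fop).prod) (β s t) =
          (∏ j, (if ε j + δ j = 0 then (ε j + δ j) * (ε j + δ j) - 4 else ε j + δ j)) •
            β s t := by
        rw [listProdEig fop _ _ hzeig, Finset.prod_map_toList]
      have hcne : (∏ j, (if ε j + δ j = 0 then (ε j + δ j) * (ε j + δ j) - 4
          else ε j + δ j)) ≠ 0 := by
        rw [Finset.prod_ne_zero_iff]
        intro j _
        by_cases h0 : ε j + δ j = 0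
        · rw [if_pos h0, h0]
          intro hx
          apply h4
          linear_combination -hx
        · rw [if_neg h0]
          exact h0
      -- every spanning commutator is killed by the product operator
      have hwt0 : ∀ (j : Fin l) (g₀ : Fin l ⊕ Fin l), j ≠ Sum.elim id id g₀ →
          wtD k j g₀ = 0 := by
        rintro j (i | i) hj
        · exact if_neg (fun h => hj h.symm)
        · exact if_neg (fun h => hj h.symm)
      have hwt2 : ∀ g₀ : Fin l ⊕ Fin l, wtD k (Sum.elim id id g₀) g₀ = 2 ∨
          wtD k (Sum.elim id id g₀) g₀ = -2 := by
        rintro (i | i)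
        · left; simp [wtD]
        · right; simp [wtD]
      have hgenkill : ∀ g g' : Fin l ⊕ Fin l,
          ((Finset.univ.toList.map fop).prod) (CbD (genP b g) (genP b g')) = 0 := by
        intro g g'
        by_cases hgg : g = g'
        · subst hgg
          have hz0 : CbD (genP b g) (genP b g) = 0 := by rw [CbD_apply, sub_self]
          rw [hz0, map_zero]
        · have hfw := hfopeig (CbD (genP b g) (genP b g'))
            (fun j => wtD k j g + wtD k j g') (fun j => TD_CbD b j g g')
          rw [listProdEig fop _ _ hfw]
          -- find a vanishing factor
          suffices hex : ∃ j0 : Fin l, (if ε j0 + δ j0 = 0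
              then (wtD k j0 g + wtD k j0 g') * (wtD k j0 g + wtD k j0 g') - 4
              else wtD k j0 g + wtD k j0 g') = 0 by
            obtain ⟨j0, hj0⟩ := hex
            rw [List.prod_eq_zero (List.mem_map.mpr ⟨j0,
              Finset.mem_toList.mpr (Finset.mem_univ j0), hj0⟩), zero_smul]
          by_cases hidx : (Sum.elim id id g : Fin l) = Sum.elim id id g'
          · -- the weights cancel everywhere
            have hmu : ∀ j, wtD k j g + wtD k j g' = 0 := by
              rcases g with i | i <;> rcases g' with i' | i'
              · simp only [Sum.elim_inl, id_eq] at hidx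
                exact absurd (by rw [hidx]) hgg
              · simp only [Sum.elim_inl, Sum.elim_inr, id_eq] at hidx
                subst hidx
                intro j
                by_cases hij : i = j
                · simp [wtD, hij]
                · simp [wtD, hij]
              · simp only [Sum.elim_inl, Sum.elim_inr, id_eq] at hidx
                subst hidx
                intro j
                by_cases hij : i = j
                · simp [wtD, hij]
                · simp [wtD, hij]
              · simp only [Sum.elim_inr, id_eq] at hidx
                exact absurd (by rw [hidx]) hgg
            have hNne : (Finset.univ.filter (fun j => ε j + δ j ≠ 0)).Nonempty := by
              rw [← Finset.card_pos]
              rcases hNodd with ⟨a, ha⟩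
              omega
            obtain ⟨j0, hj0N⟩ := hNne
            rw [Finset.mem_filter] at hj0N
            exact ⟨j0, by rw [if_neg hj0N.2, hmu j0]⟩
          · -- two distinct indices carrying weight ±2
            by_cases h1N : (Sum.elim id id g : Fin l) ∈
                Finset.univ.filter (fun j => ε j + δ j ≠ 0)
            · by_cases h2N : (Sum.elim id id g' : Fin l) ∈
                  Finset.univ.filter (fun j => ε j + δ j ≠ 0)
              · -- both indices in N : find a third element of N
                have hnsub : ¬ ((Finset.univ.filter (fun j => ε j + δ j ≠ 0)) ⊆
                    {Sum.elim id id g, Sum.elim id id g'}) := by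
                  intro hsub
                  have heq : (Finset.univ.filter (fun j => ε j + δ j ≠ 0)) =
                      {Sum.elim id id g, Sum.elim id id g'} := by
                    refine Finset.Subset.antisymm hsub ?_
                    intro x hx
                    rcases Finset.mem_insert.mp hx with h | h
                    · rw [h]; exact h1N
                    · rw [Finset.mem_singleton.mp h]; exact h2N
                  rw [heq, Finset.card_insert_of_notMem (by simp [hidx]),
                    Finset.card_singleton] at hNodd
                  rcases hNodd with ⟨a, ha⟩
                  omega
                obtain ⟨j0, hj0N, hj0ni⟩ := Finset.not_subset.mp hnsub
                have hj0ne1 : j0 ≠ Sum.elim id id g :=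
                  fun h => hj0ni (by rw [h]; exact Finset.mem_insert_self _ _)
                have hj0ne2 : j0 ≠ Sum.elim id id g' := fun h => hj0ni (by rw [h]; simp)
                rw [Finset.mem_filter] at hj0N
                exact ⟨j0, by rw [if_neg hj0N.2, hwt0 j0 g hj0ne1, hwt0 j0 g' hj0ne2,
                  add_zero]⟩
              · -- idx g' not in N
                refine ⟨Sum.elim id id g', ?_⟩
                rw [Finset.mem_filter, not_and] at h2N
                have h0 : ε (Sum.elim id id g') + δ (Sum.elim id id g') = 0 :=
                  not_not.mp (h2N (Finset.mem_univ _))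
                rw [if_pos h0, hwt0 _ g (fun h => hidx h.symm), zero_add]
                rcases hwt2 g' with h | h <;> rw [h] <;> norm_num
            · -- idx g not in N
              refine ⟨Sum.elim id id g, ?_⟩
              rw [Finset.mem_filter, not_and] at h1N
              have h0 : ε (Sum.elim id id g) + δ (Sum.elim id id g) = 0 :=
                not_not.mp (h1N (Finset.mem_univ _))
              rw [if_pos h0, hwt0 _ g' hidx, add_zero]
              rcases hwt2 g with h | h <;> rw [h] <;> norm_num
      -- the product operator kills all of soD
      have hBB : ∀ g : Fin l ⊕ Fin l, (Module.Basis.prod b.dualBasis b) g = genP b g := by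
        rintro (i | i)
        · refine Prod.ext ?_ ?_
          · rw [Module.Basis.prod_apply_inl_fst]
            show b.dualBasis i = (genP b (.inl i)).1
            rw [Module.Basis.coe_dualBasis]
            rfl
          · rw [Module.Basis.prod_apply_inl_snd]
            rfl
        · refine Prod.ext ?_ ?_
          · rw [Module.Basis.prod_apply_inr_fst]
            rfl
          · rw [Module.Basis.prod_apply_inr_snd]
            rfl
      have hsoDkill : ∀ w ∈ soD k V, ((Finset.univ.toList.map fop).prod) w = 0 := by
        intro w hw
        have hker : soD k V ≤ LinearMap.ker ((Finset.univ.toList.map fop).prod) := by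
          rw [soD, Submodule.span_le]
          rintro w' ⟨x, y, rfl⟩
          rw [SetLike.mem_coe, LinearMap.mem_ker, ← CbD_apply]
          have hx := Module.Basis.sum_repr (Module.Basis.prod b.dualBasis b) x
          have hy := Module.Basis.sum_repr (Module.Basis.prod b.dualBasis b) y
          rw [← hx, ← hy]
          simp only [map_sum, map_smul, LinearMap.sum_apply, LinearMap.smul_apply, hBB]
          simp only [hgenkill, smul_zero, Finset.sum_const_zero]
        exact hker hw
      have hfinal := hsoDkill (β s t) (hβrange s t)
      rw [hOpz] at hfinal
      rcases smul_eq_zero.mp hfinal with h | h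
      · exact absurd h hcne
      · exact h
    | @insert a G ha ih =>
      intro s t hs ht
      have hbt : β s t =
          β ((2:k)⁻¹ • (s + (1:k) • R a s)) ((2:k)⁻¹ • (t + (1:k) • R a t)) +
          β ((2:k)⁻¹ • (s + (1:k) • R a s)) ((2:k)⁻¹ • (t + (-1:k) • R a t)) +
          (β ((2:k)⁻¹ • (s + (-1:k) • R a s)) ((2:k)⁻¹ • (t + (1:k) • R a t)) +
          β ((2:k)⁻¹ • (s + (-1:k) • R a s)) ((2:k)⁻¹ • (t + (-1:k) • R a t))) := by
        conv_lhs => rw [hsum a s, hsum a t]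
        simp only [map_add, LinearMap.add_apply]
        abel
      rw [hbt,
        ih _ _ (hsplit a G ha s hs 1 (Or.inl rfl)) (hsplit a G ha t ht 1 (Or.inl rfl)),
        ih _ _ (hsplit a G ha s hs 1 (Or.inl rfl)) (hsplit a G ha t ht (-1) (Or.inr rfl)),
        ih _ _ (hsplit a G ha s hs (-1) (Or.inr rfl)) (hsplit a G ha t ht 1 (Or.inl rfl)),
        ih _ _ (hsplit a G ha s hs (-1) (Or.inr rfl)) (hsplit a G ha t ht (-1) (Or.inr rfl))]
      simp
  intro s t
  exact main Finset.univ s t (fun j hj => absurd (Finset.mem_univ j) hj)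
    (fun j hj => absurd (Finset.mem_univ j) hj)
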